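/- arXiv:2512.21007 — 2 statements merged into one kernel-verified Lean document; each statement's English description precedes it below -/
import Mathlib

section
/- Let f be in the class R (bounded turning) and let A_2, A_3, A_4 be the coefficients of the inverse function. Then |A_2| ≤ 1, |A_3| ≤ 4/3, and |A_4| ≤ 13/6. -/
/-!
Write `p = f'`, so `p 0 = 1` and `Re p > 0`. Then `ω = (p - 1) / (p + 1)` maps the disk into
itself and vanishes at `0`, so by the Schwarz lemma `p = 1 + z φ (1 + p)` for a map `φ` of the
disk into the closed disk. Differentiating this identity expresses the Taylor coefficients of `f`
through `b₁ = φ 0`, `b₂ = φ' 0`, `b₃ = φ'' 0 / 2`, and then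
`A₂ = -b₁`, `A₃ = (4 b₁² - 2 b₂) / 3`, `A₄ = -(3 b₃ - 14 b₁ b₂ + 13 b₁³) / 6`.
The Schwarz–Pick lemma gives `|b₂| ≤ 1 - |b₁|²`; composing `φ` with the disk automorphism sending
`φ 0` to `0` and applying Schwarz–Pick once more gives `|b₃| ≤ 1 - |b₁|²` as well. The triangle
inequality then finishes.
-/

open Complex ComplexConjugate Metric Set Filter Topology

local notation "𝔻" => ball (0 : ℂ) 1

section IteratedDeriv

variable {𝕜 : Type*} [NontriviallyNormedField 𝕜]

lemma iteratedDeriv_succ_const_add_id_mul {n : ℕ} {h : 𝕜 → 𝕜} (hh : ContDiffAt 𝕜 (n + 1) h 0)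
    (c : 𝕜) : iteratedDeriv (n + 1) (fun z => c + z * h z) 0 = (n + 1) * iteratedDeriv n h 0 := by
  rw [iteratedDeriv_const_add (by omega : 0 < n + 1), iteratedDeriv_fun_mul contDiffAt_fun_id hh,
    Finset.sum_eq_single 1]
  · simp
  · intro i _ hi
    simp [iteratedDeriv_fun_id_zero, hi]
  · simp

lemma iteratedDeriv_two_fun_mul {f g : 𝕜 → 𝕜} {x : 𝕜} (hf : ContDiffAt 𝕜 2 f x)
    (hg : ContDiffAt 𝕜 2 g x) :
    iteratedDeriv 2 (fun z => f z * g z) x =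
      iteratedDeriv 2 f x * g x + 2 * deriv f x * deriv g x + f x * iteratedDeriv 2 g x := by
  rw [iteratedDeriv_fun_mul hf hg]
  simp only [Nat.reduceAdd, Finset.sum_range_succ, Finset.range_one, Finset.sum_singleton,
    Nat.choose_zero_right, Nat.cast_one, iteratedDeriv_zero, one_mul, tsub_zero,
    Nat.choose_succ_self_right, Nat.cast_ofNat, iteratedDeriv_one, Nat.add_one_sub_one,
    Nat.choose_self, tsub_self]
  ring

end IteratedDeriv

noncomputable def blaschkeFactor (c w : ℂ) : ℂ := (w - c) / (1 - conj c * w)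

lemma normSq_one_sub_conj_mul_sub_normSq_sub (c w : ℂ) :
    normSq (1 - conj c * w) - normSq (w - c) = (1 - normSq c) * (1 - normSq w) := by
  simp only [normSq_apply, sub_re, sub_im, mul_re, mul_im, conj_re, conj_im, one_re, one_im]
  ring

lemma one_sub_conj_mul_ne_zero {c w : ℂ} (hc : ‖c‖ < 1) (hw : ‖w‖ ≤ 1) :
    1 - conj c * w ≠ 0 := by
  refine sub_ne_zero.2 fun h => ?_
  have : ‖conj c * w‖ < 1 := by
    rw [norm_mul, RCLike.norm_conj]
    nlinarith [norm_nonneg c, norm_nonneg w]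
  rw [← h, norm_one] at this
  exact this.false

lemma norm_one_sub_conj_mul_self {c : ℂ} (hc : ‖c‖ ≤ 1) : ‖1 - conj c * c‖ = 1 - ‖c‖ ^ 2 := by
  rw [conj_mul', ← ofReal_pow, ← ofReal_one, ← ofReal_sub, norm_real, Real.norm_eq_abs,
    abs_of_nonneg (by nlinarith [norm_nonneg c])]

lemma norm_blaschkeFactor_le_one {c w : ℂ} (hc : ‖c‖ < 1) (hw : ‖w‖ ≤ 1) :
    ‖blaschkeFactor c w‖ ≤ 1 := by
  rw [blaschkeFactor, norm_div, div_le_one (norm_pos_iff.2 (one_sub_conj_mul_ne_zero hc hw)),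
    ← sq_le_sq₀ (norm_nonneg _) (norm_nonneg _), Complex.sq_norm, Complex.sq_norm,
    ← sub_nonneg, normSq_one_sub_conj_mul_sub_normSq_sub, ← Complex.sq_norm, ← Complex.sq_norm]
  exact mul_nonneg (by nlinarith [norm_nonneg c]) (by nlinarith [norm_nonneg w])

lemma norm_sub_one_lt_norm_add_one {w : ℂ} (hw : 0 < w.re) : ‖w - 1‖ < ‖w + 1‖ := by
  rw [← sq_lt_sq₀ (norm_nonneg _) (norm_nonneg _), Complex.sq_norm, Complex.sq_norm]
  simp only [normSq_apply, sub_re, sub_im, add_re, add_im, one_re, one_im]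
  nlinarith

lemma zero_mem_unitBall : (0 : ℂ) ∈ 𝔻 := mem_ball_self one_pos

lemma unitBall_mem_nhds_zero : 𝔻 ∈ 𝓝 (0 : ℂ) := isOpen_ball.mem_nhds zero_mem_unitBall

lemma iteratedDeriv_succ_eq_of_eqOn {s : Set ℂ} (hs : s ∈ 𝓝 0) {φ h : ℂ → ℂ} {c : ℂ}
    (heq : EqOn φ (fun z => c + z * h z) s) (hh : DifferentiableOn ℂ h s) (n : ℕ) :
    iteratedDeriv (n + 1) φ 0 = (n + 1) * iteratedDeriv n h 0 := by
  rw [(heq.eventuallyEq_of_mem hs).iteratedDeriv_eq,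
    iteratedDeriv_succ_const_add_id_mul (hh.analyticAt hs).contDiffAt]

lemma mapsTo_dslope_zero {ω : ℂ → ℂ} (hd : DifferentiableOn ℂ ω 𝔻)
    (hω : MapsTo ω 𝔻 (closedBall 0 1)) (hω0 : ω 0 = 0) :
    MapsTo (dslope ω 0) 𝔻 (closedBall 0 1) := fun z hz => by
  simpa using Complex.norm_dslope_le_div_of_mapsTo_ball hd (by rwa [hω0]) hz

lemma exists_eqOn_one_add_mul_of_re_pos {p : ℂ → ℂ} (hd : DifferentiableOn ℂ p 𝔻)
    (hp0 : p 0 = 1) (hre : ∀ z ∈ 𝔻, 0 < (p z).re) :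
    ∃ φ : ℂ → ℂ, DifferentiableOn ℂ φ 𝔻 ∧ MapsTo φ 𝔻 (closedBall 0 1) ∧
      EqOn p (fun z => 1 + z * (φ z * (1 + p z))) 𝔻 := by
  have hne : ∀ z ∈ 𝔻, 1 + p z ≠ 0 := fun z hz h => by
    have h' := congrArg re h
    simp only [add_re, one_re, zero_re] at h'
    linarith [hre z hz]
  set ω := fun z => (p z - 1) / (1 + p z)
  have hωd : DifferentiableOn ℂ ω 𝔻 :=
    (hd.sub_const 1).div ((differentiableOn_const 1).add hd) hne
  have hω : MapsTo ω 𝔻 (closedBall 0 1) := fun z hz => by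
    rw [mem_closedBall_zero_iff, norm_div, add_comm]
    exact div_le_one_of_le₀ (norm_sub_one_lt_norm_add_one (hre z hz)).le (norm_nonneg _)
  have hω0 : ω 0 = 0 := by simp [ω, hp0]
  refine ⟨dslope ω 0, (differentiableOn_dslope unitBall_mem_nhds_zero).2 hωd,
    mapsTo_dslope_zero hωd hω hω0, fun z hz => ?_⟩
  have hωz : z * dslope ω 0 z = ω z := by simpa [hω0] using sub_smul_dslope ω 0 z
  dsimp only
  rw [← mul_assoc, hωz, div_mul_cancel₀ _ (hne z hz)]
  ring

lemma exists_eqOn_add_mul_of_norm_lt_one {φ : ℂ → ℂ} (hd : DifferentiableOn ℂ φ 𝔻)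
    (hφ : MapsTo φ 𝔻 (closedBall 0 1)) (hlt : ‖φ 0‖ < 1) :
    ∃ χ : ℂ → ℂ, DifferentiableOn ℂ χ 𝔻 ∧ MapsTo χ 𝔻 (closedBall 0 1) ∧
      EqOn φ (fun z => φ 0 + z * (χ z * (1 - conj (φ 0) * φ z))) 𝔻 := by
  have hne : ∀ z ∈ 𝔻, 1 - conj (φ 0) * φ z ≠ 0 := fun z hz =>
    one_sub_conj_mul_ne_zero hlt (mem_closedBall_zero_iff.1 (hφ hz))
  set ψ := fun z => blaschkeFactor (φ 0) (φ z)
  have hψd : DifferentiableOn ℂ ψ 𝔻 :=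
    (hd.sub_const _).div ((differentiableOn_const 1).sub (hd.const_mul _)) hne
  have hψ : MapsTo ψ 𝔻 (closedBall 0 1) := fun z hz =>
    mem_closedBall_zero_iff.2 (norm_blaschkeFactor_le_one hlt (mem_closedBall_zero_iff.1 (hφ hz)))
  have hψ0 : ψ 0 = 0 := by simp [ψ, blaschkeFactor]
  refine ⟨dslope ψ 0, (differentiableOn_dslope unitBall_mem_nhds_zero).2 hψd,
    mapsTo_dslope_zero hψd hψ hψ0, fun z hz => ?_⟩
  have hψz : z * dslope ψ 0 z = ψ z := by simpa [hψ0] using sub_smul_dslope ψ 0 z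
  dsimp only
  rw [← mul_assoc, hψz]
  simp only [ψ, blaschkeFactor, div_mul_cancel₀ _ (hne z hz)]
  ring

lemma eventuallyEq_const_of_norm_eq_one {φ : ℂ → ℂ} (hd : DifferentiableOn ℂ φ 𝔻)
    (hφ : MapsTo φ 𝔻 (closedBall 0 1)) (h1 : ‖φ 0‖ = 1) : φ =ᶠ[𝓝 0] fun _ => φ 0 := by
  refine eventually_of_mem unitBall_mem_nhds_zero ?_
  refine eqOn_of_isPreconnected_of_isMaxOn_norm (convex_ball 0 1).isPreconnected isOpen_ball hd
    zero_mem_unitBall fun z hz => ?_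
  simpa [h1] using hφ hz

lemma norm_deriv_le_one_sub_sq {φ : ℂ → ℂ} (hd : DifferentiableOn ℂ φ 𝔻)
    (hφ : MapsTo φ 𝔻 (closedBall 0 1)) : ‖deriv φ 0‖ ≤ 1 - ‖φ 0‖ ^ 2 := by
  have h0 : ‖φ 0‖ ≤ 1 := mem_closedBall_zero_iff.1 (hφ zero_mem_unitBall)
  rcases h0.lt_or_eq with hlt | h1
  · obtain ⟨χ, hχd, hχ, hEq⟩ := exists_eqOn_add_mul_of_norm_lt_one hd hφ hlt
    have hvd : DifferentiableOn ℂ (fun z => 1 - conj (φ 0) * φ z) 𝔻 :=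
      (differentiableOn_const 1).sub (hd.const_mul _)
    have hderiv := iteratedDeriv_succ_eq_of_eqOn unitBall_mem_nhds_zero hEq (hχd.mul hvd) 0
    simp only [zero_add, iteratedDeriv_one, iteratedDeriv_zero, CharP.cast_eq_zero, one_mul]
      at hderiv
    rw [hderiv, norm_mul, norm_one_sub_conj_mul_self h0]
    exact mul_le_of_le_one_left (by nlinarith [norm_nonneg (φ 0)])
      (mem_closedBall_zero_iff.1 (hχ zero_mem_unitBall))
  · rw [(eventuallyEq_const_of_norm_eq_one hd hφ h1).deriv_eq, deriv_const, h1]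
    norm_num

lemma norm_iteratedDeriv_two_le {φ : ℂ → ℂ} (hd : DifferentiableOn ℂ φ 𝔻)
    (hφ : MapsTo φ 𝔻 (closedBall 0 1)) : ‖iteratedDeriv 2 φ 0‖ ≤ 2 * (1 - ‖φ 0‖ ^ 2) := by
  have h0 : ‖φ 0‖ ≤ 1 := mem_closedBall_zero_iff.1 (hφ zero_mem_unitBall)
  rcases h0.lt_or_eq with hlt | h1
  · obtain ⟨χ, hχd, hχ, hEq⟩ := exists_eqOn_add_mul_of_norm_lt_one hd hφ hlt
    set c := φ 0
    have hvd : DifferentiableOn ℂ (fun z => 1 - conj c * φ z) 𝔻 :=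
      (differentiableOn_const 1).sub (hd.const_mul _)
    have hd1 := iteratedDeriv_succ_eq_of_eqOn unitBall_mem_nhds_zero hEq (hχd.mul hvd) 0
    have hd2 := iteratedDeriv_succ_eq_of_eqOn unitBall_mem_nhds_zero hEq (hχd.mul hvd) 1
    have hdiff := fun {f : ℂ → ℂ} (hf : DifferentiableOn ℂ f 𝔻) =>
      hf.differentiableAt unitBall_mem_nhds_zero
    simp only [zero_add, iteratedDeriv_one, iteratedDeriv_zero, CharP.cast_eq_zero, one_mul,
      Nat.cast_one, one_add_one_eq_two] at hd1 hd2
    rw [deriv_fun_mul (hdiff hχd) (hdiff hvd), deriv_const_sub, deriv_const_mul _ (hdiff hd),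
      hd1] at hd2
    have hformula : iteratedDeriv 2 φ 0 =
        2 * (1 - conj c * c) * (deriv χ 0 - conj c * χ 0 ^ 2) := by
      rw [hd2]; ring
    have hχ0 : ‖χ 0‖ ≤ 1 := mem_closedBall_zero_iff.1 (hχ zero_mem_unitBall)
    have hχ' := norm_deriv_le_one_sub_sq hχd hχ
    have hbound : ‖deriv χ 0 - conj c * χ 0 ^ 2‖ ≤ 1 :=
      calc ‖deriv χ 0 - conj c * χ 0 ^ 2‖ ≤ ‖deriv χ 0‖ + ‖c‖ * ‖χ 0‖ ^ 2 :=
            (norm_sub_le _ _).trans_eq (by rw [norm_mul, Complex.norm_conj, norm_pow])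
        _ ≤ 1 := by nlinarith [norm_nonneg (χ 0)]
    rw [hformula, norm_mul, norm_mul, norm_one_sub_conj_mul_self h0, Complex.norm_two]
    exact mul_le_of_le_one_right (by nlinarith [norm_nonneg c]) hbound
  · rw [(eventuallyEq_const_of_norm_eq_one hd hφ h1).iteratedDeriv_eq, iteratedDeriv_const, h1]
    norm_num

lemma exists_coeffs_of_re_pos {p : ℂ → ℂ} (hd : DifferentiableOn ℂ p 𝔻) (hp0 : p 0 = 1)
    (hre : ∀ z ∈ 𝔻, 0 < (p z).re) :
    ∃ b₁ b₂ b₃ : ℂ, ‖b₁‖ ≤ 1 ∧ ‖b₂‖ ≤ 1 - ‖b₁‖ ^ 2 ∧ ‖b₃‖ ≤ 1 - ‖b₁‖ ^ 2 ∧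
      deriv p 0 = 2 * b₁ ∧ iteratedDeriv 2 p 0 = 4 * b₂ + 4 * b₁ ^ 2 ∧
      iteratedDeriv 3 p 0 = 12 * b₃ + 24 * b₁ * b₂ + 12 * b₁ ^ 3 := by
  obtain ⟨φ, hφd, hφ, hEq⟩ := exists_eqOn_one_add_mul_of_re_pos hd hp0 hre
  have hqd : DifferentiableOn ℂ (fun z => 1 + p z) 𝔻 := (differentiableOn_const 1).add hd
  have hφa := (hφd.analyticAt unitBall_mem_nhds_zero).contDiffAt (n := 2)
  have hqa := (hqd.analyticAt unitBall_mem_nhds_zero).contDiffAt (n := 2)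
  have hderiv := iteratedDeriv_succ_eq_of_eqOn unitBall_mem_nhds_zero hEq (hφd.mul hqd)
  have h1 := hderiv 0
  have h2 := hderiv 1
  have h3 := hderiv 2
  simp only [zero_add, iteratedDeriv_one, iteratedDeriv_zero, CharP.cast_eq_zero, one_mul,
    Nat.cast_one, one_add_one_eq_two, hp0] at h1 h2 h3
  rw [deriv_fun_mul (hφa.differentiableAt two_ne_zero) (hqa.differentiableAt two_ne_zero),
    deriv_const_add, hp0, h1] at h2
  rw [iteratedDeriv_two_fun_mul hφa hqa, deriv_const_add, iteratedDeriv_const_add two_pos,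
    hp0, h1, h2] at h3
  have hφ0 : ‖φ 0‖ ≤ 1 := mem_closedBall_zero_iff.1 (hφ zero_mem_unitBall)
  refine ⟨φ 0, deriv φ 0, iteratedDeriv 2 φ 0 / 2, hφ0, norm_deriv_le_one_sub_sq hφd hφ, ?_,
    by rw [h1]; ring, by rw [h2]; ring, by rw [h3]; push_cast; ring⟩
  rw [norm_div, Complex.norm_two, div_le_iff₀ two_pos, mul_comm]
  exact norm_iteratedDeriv_two_le hφd hφ

section SchurBounds

variable {b₁ b₂ b₃ : ℂ}

lemma norm_four_mul_sq_sub_two_mul_le (hb₁ : ‖b₁‖ ≤ 1) (hb₂ : ‖b₂‖ ≤ 1 - ‖b₁‖ ^ 2) :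
    ‖4 * b₁ ^ 2 - 2 * b₂‖ ≤ 4 := by
  have : ‖4 * b₁ ^ 2 - 2 * b₂‖ ≤ 4 * ‖b₁‖ ^ 2 + 2 * ‖b₂‖ := by
    refine (norm_sub_le _ _).trans_eq ?_
    rw [norm_mul, norm_mul, norm_pow, Complex.norm_two, Complex.norm_ofNat]
  nlinarith [norm_nonneg b₁]

lemma norm_three_mul_sub_fourteen_mul_add_thirteen_mul_le (hb₁ : ‖b₁‖ ≤ 1)
    (hb₂ : ‖b₂‖ ≤ 1 - ‖b₁‖ ^ 2) (hb₃ : ‖b₃‖ ≤ 1 - ‖b₁‖ ^ 2) :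
    ‖3 * b₃ - 14 * b₁ * b₂ + 13 * b₁ ^ 3‖ ≤ 13 := by
  have : ‖3 * b₃ - 14 * b₁ * b₂ + 13 * b₁ ^ 3‖ ≤
      3 * ‖b₃‖ + 14 * ‖b₁‖ * ‖b₂‖ + 13 * ‖b₁‖ ^ 3 := by
    refine (norm_add_le_of_le (norm_sub_le _ _) le_rfl).trans_eq ?_
    simp only [norm_mul, norm_pow, Complex.norm_ofNat]
  have hr := norm_nonneg b₁
  -- 13 - (3(1 - r²) + 14 r (1 - r²) + 13 r³) = (1 - r)(10 - 4r - r²)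
  nlinarith [mul_le_mul_of_nonneg_left hb₂ (by linarith : (0 : ℝ) ≤ 14 * ‖b₁‖),
    mul_nonneg (sub_nonneg.2 hb₁) (by nlinarith : (0 : ℝ) ≤ 10 - 4 * ‖b₁‖ - ‖b₁‖ ^ 2)]

end SchurBounds

theorem inverse_coeff_bounds_R_general (f : ℂ → ℂ)
    (hf : AnalyticOnNhd ℂ f (ball (0:ℂ) 1))
    (hf1 : deriv f 0 = 1)
    (hre : ∀ z ∈ ball (0:ℂ) 1, 0 < (deriv f z).re)
    (a₂ a₃ a₄ A₂ A₃ A₄ : ℂ)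
    (ha₂ : a₂ = iteratedDeriv 2 f 0 / 2)
    (ha₃ : a₃ = iteratedDeriv 3 f 0 / 6)
    (ha₄ : a₄ = iteratedDeriv 4 f 0 / 24)
    (hA₂ : A₂ = -a₂)
    (hA₃ : A₃ = 2 * a₂ ^ 2 - a₃)
    (hA₄ : A₄ = -a₄ + 5 * a₂ * a₃ - 5 * a₂ ^ 3) :
    ‖A₂‖ ≤ 1 ∧ ‖A₃‖ ≤ 4 / 3 ∧ ‖A₄‖ ≤ 13 / 6 := by
  obtain ⟨b₁, b₂, b₃, hb₁, hb₂, hb₃, hp₁, hp₂, hp₃⟩ :=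
    exists_coeffs_of_re_pos hf.deriv.differentiableOn hf1 hre
  have ha₂' : a₂ = b₁ := by rw [ha₂, iteratedDeriv_succ', iteratedDeriv_one, hp₁]; ring
  have ha₃' : a₃ = (2 * b₂ + 2 * b₁ ^ 2) / 3 := by rw [ha₃, iteratedDeriv_succ', hp₂]; ring
  have ha₄' : a₄ = (b₃ + 2 * b₁ * b₂ + b₁ ^ 3) / 2 := by
    rw [ha₄, iteratedDeriv_succ', hp₃]; ring
  refine ⟨by rwa [hA₂, ha₂', norm_neg], ?_, ?_⟩
  · have h := norm_four_mul_sq_sub_two_mul_le hb₁ hb₂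
    rw [hA₃, ha₂', ha₃', show 2 * b₁ ^ 2 - (2 * b₂ + 2 * b₁ ^ 2) / 3
      = (4 * b₁ ^ 2 - 2 * b₂) / 3 by ring, norm_div, Complex.norm_ofNat]
    linarith
  · have h := norm_three_mul_sub_fourteen_mul_add_thirteen_mul_le hb₁ hb₂ hb₃
    rw [hA₄, ha₂', ha₃', ha₄', show -((b₃ + 2 * b₁ * b₂ + b₁ ^ 3) / 2)
      + 5 * b₁ * ((2 * b₂ + 2 * b₁ ^ 2) / 3) - 5 * b₁ ^ 3
      = -(3 * b₃ - 14 * b₁ * b₂ + 13 * b₁ ^ 3) / 6 by ring, norm_div, norm_neg,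
      Complex.norm_ofNat]
    linarith

theorem inverse_coeff_bounds_R (f : ℂ → ℂ)
    (hf : AnalyticOnNhd ℂ f (ball (0:ℂ) 1))
    (hf0 : f 0 = 0) (hf1 : deriv f 0 = 1)
    (hre : ∀ z ∈ ball (0:ℂ) 1, 0 < (deriv f z).re)
    (a₂ a₃ a₄ A₂ A₃ A₄ : ℂ)
    (ha₂ : a₂ = iteratedDeriv 2 f 0 / 2)
    (ha₃ : a₃ = iteratedDeriv 3 f 0 / 6)
    (ha₄ : a₄ = iteratedDeriv 4 f 0 / 24)
    (hA₂ : A₂ = -a₂)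
    (hA₃ : A₃ = 2 * a₂ ^ 2 - a₃)
    (hA₄ : A₄ = -a₄ + 5 * a₂ * a₃ - 5 * a₂ ^ 3) :
    ‖A₂‖ ≤ 1 ∧ ‖A₃‖ ≤ 4 / 3 ∧ ‖A₄‖ ≤ 13 / 6 :=
  inverse_coeff_bounds_R_general f hf hf1 hre a₂ a₃ a₄ A₂ A₃ A₄ ha₂ ha₃ ha₄ hA₂ hA₃ hA₄
end

section
/- Let f be in the class R (bounded turning) and let A_2, A_3, A_4 be the coefficients of the inverse function. Then |A_2^2 - 2A_3^2 + A_2 A_4| ≤ 43/18. -/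
open Complex Metric Set Filter Topology ComplexConjugate

/-!
Since `Re f' > 0` and `f'(0) = 1`, the function `(f' - 1) / (f' + 1)` maps the disk into itself and
vanishes at `0`, so `f' - 1 = z φ (1 + f')` for a holomorphic `φ` with `|φ| ≤ 1`. In terms of
`b₁ = φ 0`, `b₂ = φ' 0`, `b₃ = φ'' 0 / 2` the functional equals
`b₁² - 25/18 b₁⁴ + 11/9 b₁² b₂ - 8/9 b₂² + 1/2 b₁ b₃`. Schwarz–Pick gives `|b₂| ≤ 1 - |b₁|²`, and
applied once more to the Schur transform of `φ` it gives `|b₃| ≤ 1 - |b₁|²`; the triangle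
inequality then leaves a polynomial inequality in `|b₁| ≤ 1`, with equality at `|b₁| = 1`.
-/

theorem iteratedDeriv_succ_eq_of_eventuallyEq_const_add_mul {𝕜 : Type*}
    [NontriviallyNormedField 𝕜] {f P : 𝕜 → 𝕜} {c : 𝕜} {n : ℕ}
    (hP : ContDiffAt 𝕜 (n + 1 : ℕ) P 0) (h : f =ᶠ[𝓝 0] fun z => c + z * P z) :
    iteratedDeriv (n + 1) f 0 = (n + 1) * iteratedDeriv n P 0 := by
  rw [h.iteratedDeriv_eq, iteratedDeriv_const_add n.succ_pos,
    iteratedDeriv_fun_mul (f := fun z => z) contDiffAt_fun_id hP, Finset.sum_eq_single 1]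
  · simp [iteratedDeriv_fun_id_zero]
  · intro i _ hi
    simp [iteratedDeriv_fun_id_zero, hi]
  · simp

theorem Complex.norm_sub_le_norm_one_sub_conj_mul {a v : ℂ} (ha : ‖a‖ ≤ 1) (hv : ‖v‖ ≤ 1) :
    ‖v - a‖ ≤ ‖1 - conj a * v‖ := by
  have key : ‖1 - conj a * v‖ ^ 2 - ‖v - a‖ ^ 2 = (1 - ‖a‖ ^ 2) * (1 - ‖v‖ ^ 2) := by
    simp only [Complex.sq_norm, Complex.normSq_apply, Complex.sub_re, Complex.sub_im,
      Complex.mul_re, Complex.mul_im, Complex.one_re, Complex.one_im, Complex.conj_re,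
      Complex.conj_im]
    ring
  have : 0 ≤ (1 - ‖a‖ ^ 2) * (1 - ‖v‖ ^ 2) := by
    apply mul_nonneg <;> nlinarith [norm_nonneg a, norm_nonneg v]
  nlinarith [norm_nonneg (v - a), norm_nonneg (1 - conj a * v)]

section SchwarzPick

variable {φ : ℂ → ℂ}

theorem iteratedDeriv_eq_zero_of_mapsTo_closedBall_of_norm_eq_one
    (hφ : DifferentiableOn ℂ φ (ball 0 1)) (hmaps : MapsTo φ (ball 0 1) (closedBall 0 1))
    (h : ‖φ 0‖ = 1) {n : ℕ} (hn : 0 < n) : iteratedDeriv n φ 0 = 0 := by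
  have hconst : EqOn φ (fun _ => φ 0) (ball 0 1) :=
    Complex.eqOn_of_isPreconnected_of_isMaxOn_norm (convex_ball 0 1).isPreconnected isOpen_ball
      hφ (mem_ball_self one_pos) fun z hz => by simpa [h] using hmaps hz
  rw [(hconst.eventuallyEq_of_mem (ball_mem_nhds 0 one_pos)).iteratedDeriv_eq,
    iteratedDeriv_const, if_neg hn.ne']

/-- `S` is the Schwarz quotient `dslope · 0` of `(φ - φ 0) / (1 - conj (φ 0) * φ)`. -/
theorem exists_schur_factor (hφ : DifferentiableOn ℂ φ (ball 0 1))
    (hmaps : MapsTo φ (ball 0 1) (closedBall 0 1)) (h : ‖φ 0‖ < 1) :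
    ∃ S : ℂ → ℂ, DifferentiableOn ℂ S (ball 0 1) ∧ MapsTo S (ball 0 1) (closedBall 0 1) ∧
      ∀ z ∈ ball (0 : ℂ) 1, φ z = φ 0 + z * (S z * (1 - conj (φ 0) * φ z)) := by
  set a := φ 0
  have hden : ∀ z ∈ ball (0 : ℂ) 1, 1 - conj a * φ z ≠ 0 := by
    intro z hz
    refine sub_ne_zero.2 (ne_of_apply_ne norm (ne_of_gt ?_))
    rw [norm_one, norm_mul, RCLike.norm_conj]
    have := mem_closedBall_zero_iff.1 (hmaps hz)
    nlinarith [norm_nonneg a, norm_nonneg (φ z)]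
  set M : ℂ → ℂ := fun z => (φ z - a) / (1 - conj a * φ z)
  have hM : DifferentiableOn ℂ M (ball 0 1) :=
    (hφ.sub_const a).div ((differentiableOn_const 1).sub (hφ.const_mul _)) hden
  have hM0 : M 0 = 0 := by simp [M, a]
  have hMmaps : MapsTo M (ball 0 1) (closedBall (M 0) 1) := by
    intro z hz
    rw [hM0, mem_closedBall_zero_iff, norm_div, div_le_one (norm_pos_iff.2 (hden z hz))]
    exact norm_sub_le_norm_one_sub_conj_mul h.le (mem_closedBall_zero_iff.1 (hmaps hz))
  refine ⟨dslope M 0, (differentiableOn_dslope (ball_mem_nhds 0 one_pos)).2 hM,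
    fun z hz => ?_, fun z hz => ?_⟩
  · simpa using norm_dslope_le_div_of_mapsTo_ball hM hMmaps hz
  · have hzM := sub_smul_dslope_of_zero hM0 z
    rw [sub_zero, smul_eq_mul] at hzM
    rw [← mul_assoc, hzM, div_mul_cancel₀ _ (hden z hz)]
    ring

theorem deriv_eq_and_iteratedDeriv_two_eq_of_schur_factor {S : ℂ → ℂ}
    (hφ : DifferentiableOn ℂ φ (ball 0 1)) (hS : DifferentiableOn ℂ S (ball 0 1))
    (hfac : ∀ z ∈ ball (0 : ℂ) 1, φ z = φ 0 + z * (S z * (1 - conj (φ 0) * φ z))) :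
    deriv φ 0 = S 0 * ((1 - ‖φ 0‖ ^ 2 : ℝ) : ℂ) ∧
      iteratedDeriv 2 φ 0 =
        2 * ((1 - ‖φ 0‖ ^ 2 : ℝ) : ℂ) * (deriv S 0 - conj (φ 0) * S 0 ^ 2) := by
  have h0 : ball (0 : ℂ) 1 ∈ 𝓝 0 := ball_mem_nhds 0 one_pos
  have hφa := hφ.analyticAt h0
  have hSa := hS.analyticAt h0
  have hP : AnalyticAt ℂ (fun z => S z * (1 - conj (φ 0) * φ z)) 0 := by fun_prop
  have hev := eventually_of_mem h0 hfac
  have hconj : conj (φ 0) * φ 0 = ((‖φ 0‖ ^ 2 : ℝ) : ℂ) := by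
    rw [Complex.conj_mul']; push_cast; rfl
  have hd1 : deriv φ 0 = S 0 * ((1 - ‖φ 0‖ ^ 2 : ℝ) : ℂ) := by
    have := iteratedDeriv_succ_eq_of_eventuallyEq_const_add_mul (n := 0) hP.contDiffAt hev
    rw [iteratedDeriv_one] at this
    simpa [hconj] using this
  refine ⟨hd1, ?_⟩
  have hdP : deriv (fun z => S z * (1 - conj (φ 0) * φ z)) 0
      = deriv S 0 * (1 - conj (φ 0) * φ 0) - S 0 * (conj (φ 0) * deriv φ 0) := by
    rw [(hSa.differentiableAt.hasDerivAt.fun_mul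
      ((hφa.differentiableAt.hasDerivAt.const_mul (conj (φ 0))).const_sub 1)).deriv]
    ring
  rw [iteratedDeriv_succ_eq_of_eventuallyEq_const_add_mul (n := 1) hP.contDiffAt hev,
    iteratedDeriv_one, hdP, hd1, hconj]
  push_cast
  ring

theorem norm_deriv_le_one_sub_sq_of_mapsTo_closedBall (hφ : DifferentiableOn ℂ φ (ball 0 1))
    (hmaps : MapsTo φ (ball 0 1) (closedBall 0 1)) : ‖deriv φ 0‖ ≤ 1 - ‖φ 0‖ ^ 2 := by
  rcases (mem_closedBall_zero_iff.1 (hmaps (mem_ball_self one_pos))).eq_or_lt with h | h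
  · rw [← iteratedDeriv_one,
      iteratedDeriv_eq_zero_of_mapsTo_closedBall_of_norm_eq_one hφ hmaps h one_pos, h]
    norm_num
  · obtain ⟨S, hS, hSmaps, hfac⟩ := exists_schur_factor hφ hmaps h
    have hS0 := mem_closedBall_zero_iff.1 (hSmaps (mem_ball_self one_pos))
    have hpos : 0 ≤ 1 - ‖φ 0‖ ^ 2 := by nlinarith [norm_nonneg (φ 0)]
    rw [(deriv_eq_and_iteratedDeriv_two_eq_of_schur_factor hφ hS hfac).1, norm_mul,
      Complex.norm_real, Real.norm_of_nonneg hpos]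
    nlinarith

theorem norm_iteratedDeriv_two_le_of_mapsTo_closedBall (hφ : DifferentiableOn ℂ φ (ball 0 1))
    (hmaps : MapsTo φ (ball 0 1) (closedBall 0 1)) :
    ‖iteratedDeriv 2 φ 0‖ ≤ 2 * (1 - ‖φ 0‖ ^ 2) := by
  rcases (mem_closedBall_zero_iff.1 (hmaps (mem_ball_self one_pos))).eq_or_lt with h | h
  · rw [iteratedDeriv_eq_zero_of_mapsTo_closedBall_of_norm_eq_one hφ hmaps h two_pos, h]
    norm_num
  · obtain ⟨S, hS, hSmaps, hfac⟩ := exists_schur_factor hφ hmaps h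
    have hS' := norm_deriv_le_one_sub_sq_of_mapsTo_closedBall hS hSmaps
    have hpos : 0 ≤ 1 - ‖φ 0‖ ^ 2 := by nlinarith [norm_nonneg (φ 0)]
    have hcorr : ‖deriv S 0 - conj (φ 0) * S 0 ^ 2‖ ≤ 1 := by
      calc ‖deriv S 0 - conj (φ 0) * S 0 ^ 2‖ ≤ ‖deriv S 0‖ + ‖φ 0‖ * ‖S 0‖ ^ 2 := by
            rw [← norm_pow, ← RCLike.norm_conj (φ 0), ← norm_mul]
            exact norm_sub_le _ _
        _ ≤ 1 := by nlinarith [sq_nonneg ‖S 0‖]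
    rw [(deriv_eq_and_iteratedDeriv_two_eq_of_schur_factor hφ hS hfac).2, norm_mul, norm_mul,
      Complex.norm_real, Real.norm_of_nonneg hpos, Complex.norm_two]
    nlinarith

end SchwarzPick

theorem Complex.norm_sub_one_le_norm_one_add {w : ℂ} (hw : 0 ≤ w.re) : ‖w - 1‖ ≤ ‖1 + w‖ := by
  have key : ‖1 + w‖ ^ 2 - ‖w - 1‖ ^ 2 = 4 * w.re := by
    simp only [Complex.sq_norm, Complex.normSq_apply, Complex.sub_re, Complex.sub_im,
      Complex.add_re, Complex.add_im, Complex.one_re, Complex.one_im]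
    ring
  nlinarith [norm_nonneg (w - 1), norm_nonneg (1 + w)]

theorem exists_eq_one_add_mul_of_re_pos {g : ℂ → ℂ} (hg : DifferentiableOn ℂ g (ball 0 1))
    (hg0 : g 0 = 1) (hre : ∀ z ∈ ball (0 : ℂ) 1, 0 < (g z).re) :
    ∃ φ : ℂ → ℂ, DifferentiableOn ℂ φ (ball 0 1) ∧ MapsTo φ (ball 0 1) (closedBall 0 1) ∧
      ∀ z ∈ ball (0 : ℂ) 1, g z = 1 + z * (φ z * (1 + g z)) := by
  have hden : ∀ z ∈ ball (0 : ℂ) 1, 1 + g z ≠ 0 := fun z hz h => by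
    have := congrArg Complex.re h
    simp only [Complex.add_re, Complex.one_re, Complex.zero_re] at this
    linarith [hre z hz]
  set ω : ℂ → ℂ := fun z => (g z - 1) / (1 + g z)
  have hω : DifferentiableOn ℂ ω (ball 0 1) :=
    (hg.sub_const 1).div ((differentiableOn_const 1).add hg) hden
  have hω0 : ω 0 = 0 := by simp [ω, hg0]
  have hωmaps : MapsTo ω (ball 0 1) (closedBall (ω 0) 1) := by
    intro z hz
    rw [hω0, mem_closedBall_zero_iff, norm_div, div_le_one (norm_pos_iff.2 (hden z hz))]
    exact norm_sub_one_le_norm_one_add (hre z hz).le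
  refine ⟨dslope ω 0, (differentiableOn_dslope (ball_mem_nhds 0 one_pos)).2 hω,
    fun z hz => ?_, fun z hz => ?_⟩
  · simpa using norm_dslope_le_div_of_mapsTo_ball hω hωmaps hz
  · have hzω := sub_smul_dslope_of_zero hω0 z
    rw [sub_zero, smul_eq_mul] at hzω
    rw [← mul_assoc, hzω, div_mul_cancel₀ _ (hden z hz)]
    ring

theorem iteratedDeriv_eq_of_eventuallyEq_one_add_mul {𝕜 : Type*} [NontriviallyNormedField 𝕜]
    {g φ : 𝕜 → 𝕜} (hg : ContDiffAt 𝕜 3 g 0) (hφ : ContDiffAt 𝕜 3 φ 0)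
    (h : g =ᶠ[𝓝 0] fun z => 1 + z * (φ z * (1 + g z))) :
    deriv g 0 = 2 * φ 0 ∧ iteratedDeriv 2 g 0 = 4 * deriv φ 0 + 4 * φ 0 ^ 2 ∧
      iteratedDeriv 3 g 0 =
        6 * iteratedDeriv 2 φ 0 + 24 * φ 0 * deriv φ 0 + 12 * φ 0 ^ 3 := by
  have hg0 : g 0 = 1 := by simpa using h.eq_of_nhds
  have hQ : ContDiffAt 𝕜 3 (fun z => φ z * (1 + g z)) 0 := hφ.mul (contDiffAt_const.add hg)
  have hcoeff (n : ℕ) (hn : n ≤ 2) : iteratedDeriv (n + 1) g 0 = (n + 1) *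
      ∑ i ∈ Finset.range (n + 1), n.choose i * iteratedDeriv i φ 0 *
        iteratedDeriv (n - i) (fun z => 1 + g z) 0 := by
    rw [iteratedDeriv_succ_eq_of_eventuallyEq_const_add_mul (hQ.of_le (by norm_cast; omega)) h,
      iteratedDeriv_fun_mul (hφ.of_le (by norm_cast; omega))
        (contDiffAt_const.add (hg.of_le (by norm_cast; omega)))]
  have e1 := hcoeff 0 (by norm_num)
  have e2 := hcoeff 1 (by norm_num)
  have e3 := hcoeff 2 (by norm_num)
  simp only [Finset.sum_range_succ, Finset.sum_range_zero, Nat.reduceAdd, Nat.reduceSub,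
    Nat.choose_self, Nat.choose_zero_right, Nat.choose_succ_self_right, Nat.cast_ofNat,
    Nat.cast_one, Nat.cast_zero, zero_add, one_mul, iteratedDeriv_zero, iteratedDeriv_one, hg0,
    iteratedDeriv_const_add one_pos, iteratedDeriv_const_add two_pos] at e1 e2 e3
  have d1 : deriv g 0 = 2 * φ 0 := by linear_combination e1
  have d2 : iteratedDeriv 2 g 0 = 4 * deriv φ 0 + 4 * φ 0 ^ 2 := by
    linear_combination e2 + 2 * φ 0 * d1
  exact ⟨d1, d2, by linear_combination e3 + 3 * φ 0 * d2 + 6 * deriv φ 0 * d1⟩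

theorem norm_coeff_functional_le {b₁ b₂ b₃ : ℂ} (h₁ : ‖b₁‖ ≤ 1) (h₂ : ‖b₂‖ ≤ 1 - ‖b₁‖ ^ 2)
    (h₃ : ‖b₃‖ ≤ 1 - ‖b₁‖ ^ 2) :
    ‖b₁ ^ 2 - 25 / 18 * b₁ ^ 4 + 11 / 9 * b₁ ^ 2 * b₂ - 8 / 9 * b₂ ^ 2 + 1 / 2 * b₁ * b₃‖
      ≤ 43 / 18 := by
  set x := ‖b₁‖
  calc _ ≤ ‖b₁ ^ 2‖ + ‖25 / 18 * b₁ ^ 4‖ + ‖11 / 9 * b₁ ^ 2 * b₂‖ + ‖8 / 9 * b₂ ^ 2‖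
        + ‖1 / 2 * b₁ * b₃‖ := by
        refine (norm_add_le _ _).trans (add_le_add_left ?_ _)
        refine (norm_sub_le _ _).trans (add_le_add_left ?_ _)
        exact (norm_add_le _ _).trans (add_le_add_left (norm_sub_le _ _) _)
    _ = x ^ 2 + 25 / 18 * x ^ 4 + 11 / 9 * x ^ 2 * ‖b₂‖ + 8 / 9 * ‖b₂‖ ^ 2 + 1 / 2 * x * ‖b₃‖ := by
        norm_num [x, norm_mul, norm_pow]
    _ ≤ 43 / 18 := by
        -- with `‖b₂‖, ‖b₃‖ ≤ 1 - x²` the gap is `(1 - x) (19 x³ + 10 x² + 18 x + 27) / 18`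
        have hx := norm_nonneg b₁
        nlinarith [norm_nonneg b₂, norm_nonneg b₃, mul_le_mul_of_nonneg_left h₃ hx,
          mul_le_mul_of_nonneg_left h₂ (sq_nonneg x),
          mul_le_mul_of_nonneg_left (sub_nonneg.2 h₁)
            (by positivity : 0 ≤ 19 * x ^ 3 + 10 * x ^ 2 + 18 * x + 27)]

theorem aux_bound_R_general (f : ℂ → ℂ)
    (hf : AnalyticOnNhd ℂ f (ball (0:ℂ) 1))
    (hf1 : deriv f 0 = 1)
    (hre : ∀ z ∈ ball (0:ℂ) 1, 0 < (deriv f z).re)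
    (a₂ a₃ a₄ A₂ A₃ A₄ : ℂ)
    (ha₂ : a₂ = iteratedDeriv 2 f 0 / 2)
    (ha₃ : a₃ = iteratedDeriv 3 f 0 / 6)
    (ha₄ : a₄ = iteratedDeriv 4 f 0 / 24)
    (hA₂ : A₂ = -a₂)
    (hA₃ : A₃ = 2 * a₂ ^ 2 - a₃)
    (hA₄ : A₄ = -a₄ + 5 * a₂ * a₃ - 5 * a₂ ^ 3) :
    ‖A₂ ^ 2 - 2 * A₃ ^ 2 + A₂ * A₄‖ ≤ 43 / 18 := by
  have h0 : ball (0 : ℂ) 1 ∈ 𝓝 0 := ball_mem_nhds 0 one_pos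
  obtain ⟨φ, hφ, hmaps, hfac⟩ :=
    exists_eq_one_add_mul_of_re_pos hf.deriv.differentiableOn hf1 hre
  obtain ⟨e₂, e₃, e₄⟩ := iteratedDeriv_eq_of_eventuallyEq_one_add_mul
    (hf.deriv 0 (mem_ball_self one_pos)).contDiffAt (hφ.analyticAt h0).contDiffAt
    (eventually_of_mem h0 hfac)
  rw [← iteratedDeriv_one, ← iteratedDeriv_succ'] at e₂
  rw [← iteratedDeriv_succ'] at e₃ e₄
  have hE : A₂ ^ 2 - 2 * A₃ ^ 2 + A₂ * A₄ = φ 0 ^ 2 - 25 / 18 * φ 0 ^ 4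
      + 11 / 9 * φ 0 ^ 2 * deriv φ 0 - 8 / 9 * deriv φ 0 ^ 2
      + 1 / 2 * φ 0 * (iteratedDeriv 2 φ 0 / 2) := by
    rw [hA₂, hA₃, hA₄, ha₂, ha₃, ha₄, e₂, e₃, e₄]
    ring
  rw [hE]
  refine norm_coeff_functional_le (mem_closedBall_zero_iff.1 (hmaps (mem_ball_self one_pos)))
    (norm_deriv_le_one_sub_sq_of_mapsTo_closedBall hφ hmaps) ?_
  rw [norm_div, Complex.norm_two, div_le_iff₀ two_pos, mul_comm]
  exact norm_iteratedDeriv_two_le_of_mapsTo_closedBall hφ hmaps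

theorem aux_bound_R (f : ℂ → ℂ)
    (hf : AnalyticOnNhd ℂ f (ball (0:ℂ) 1))
    (hf0 : f 0 = 0) (hf1 : deriv f 0 = 1)
    (hre : ∀ z ∈ ball (0:ℂ) 1, 0 < (deriv f z).re)
    (a₂ a₃ a₄ A₂ A₃ A₄ : ℂ)
    (ha₂ : a₂ = iteratedDeriv 2 f 0 / 2)
    (ha₃ : a₃ = iteratedDeriv 3 f 0 / 6)
    (ha₄ : a₄ = iteratedDeriv 4 f 0 / 24)
    (hA₂ : A₂ = -a₂)
    (hA₃ : A₃ = 2 * a₂ ^ 2 - a₃)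
    (hA₄ : A₄ = -a₄ + 5 * a₂ * a₃ - 5 * a₂ ^ 3) :
    ‖A₂ ^ 2 - 2 * A₃ ^ 2 + A₂ * A₄‖ ≤ 43 / 18 :=
  aux_bound_R_general f hf hf1 hre a₂ a₃ a₄ A₂ A₃ A₄ ha₂ ha₃ ha₄ hA₂ hA₃ hA₄
end
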